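/- arXiv:2408.13600 — 5 statements merged into one kernel-verified Lean document; each statement's English description precedes it below -/
import Mathlib

section
/- Let d ≥ 1, β > 0, let σ be an invertible real d×d matrix, and let A be a symmetric real d×d matrix. If A·(σσᵀ) + (2/β)·A·(σσᵀ)·A = 0 and trace(σσᵀ·((2/β)·A + I)) = 0, then A = −(β/2)·I. -/
open Matrix

lemma trace_mul_transpose_self_eq_zero' {n : ℕ} {M : Matrix (Fin n) (Fin n) ℝ}
    (h : (M * Mᵀ).trace = 0) : M = 0 := by
  have h' : ∑ i, ∑ j, M i j ^ 2 = 0 := by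
    simpa [Matrix.trace, Matrix.mul_apply, Matrix.diag, sq] using h
  have hz : ∀ i ∈ Finset.univ, ∑ j, M i j ^ 2 = (0 : ℝ) := by
    intro i _
    have := (Finset.sum_eq_zero_iff_of_nonneg (fun i _ =>
      Finset.sum_nonneg fun j _ => sq_nonneg (M i j))).mp h'
    exact this i (Finset.mem_univ i)
  ext i j
  have := (Finset.sum_eq_zero_iff_of_nonneg (fun j _ => sq_nonneg (M i j))).mp
    (hz i (Finset.mem_univ i)) j (Finset.mem_univ j)
  simpa using pow_eq_zero_iff (n := 2) (by norm_num) |>.mp this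

/-- If `A` is symmetric, `σ` invertible, `A·(σσᵀ) + (2/β)·A·(σσᵀ)·A = 0`
and `trace(σσᵀ·((2/β)·A + I)) = 0`, then `A = −(β/2)·I`. -/
theorem stmt0 {d : ℕ} (hd : 1 ≤ d) (β : ℝ) (hβ : 0 < β)
    (σ A : Matrix (Fin d) (Fin d) ℝ) (hσ : IsUnit σ) (hA : A.IsSymm)
    (h1 : A * (σ * σᵀ) + (2 / β) • (A * (σ * σᵀ) * A) = 0)
    (h2 : ((σ * σᵀ) * ((2 / β) • A + 1)).trace = 0) :
    A = (-(β / 2)) • (1 : Matrix (Fin d) (Fin d) ℝ) := by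
  set S := σ * σᵀ with hS
  set B := (2 / β) • A + 1 with hB
  have hβ' : (β : ℝ) ≠ 0 := ne_of_gt hβ
  -- A * S * B = 0
  have hASB : A * S * B = 0 := by
    rw [hB]
    rw [Matrix.mul_add, Matrix.mul_smul, Matrix.mul_one]
    rw [add_comm]
    exact h1
  -- (B - 1) = (2/β) • A
  have hB1 : B - 1 = (2 / β) • A := by rw [hB]; ring_nf; abel
  -- B * S * B = S * B
  have hBSB : B * S * B = S * B := by
    have : (B - 1) * S * B = 0 := by
      rw [hB1, Matrix.smul_mul, Matrix.smul_mul, hASB, smul_zero]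
    have h' := this
    rw [Matrix.sub_mul, Matrix.sub_mul, Matrix.one_mul, sub_eq_zero] at h'
    exact h'
  -- trace (B * S * B) = 0
  have htr : (B * S * B).trace = 0 := by rw [hBSB]; exact h2
  -- B is symmetric
  have hBsymm : Bᵀ = B := by
    rw [hB, Matrix.transpose_add, Matrix.transpose_smul, hA.eq, Matrix.transpose_one]
  -- B * S * B = (B*σ) * (B*σ)ᵀ
  have hfact : B * S * B = (B * σ) * (B * σ)ᵀ := by
    rw [Matrix.transpose_mul, hS]
    rw [hBsymm]
    noncomm_ring
  have hBσ : B * σ = 0 := by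
    apply trace_mul_transpose_self_eq_zero'
    rw [← hfact]; exact htr
  have hdet : IsUnit σ.det := (Matrix.isUnit_iff_isUnit_det σ).mp hσ
  have hB0 : B = 0 := by
    have := congrArg (fun M => M * σ⁻¹) hBσ
    simpa [Matrix.mul_assoc, Matrix.mul_nonsing_inv σ hdet] using this
  -- conclude
  have : (2 / β) • A = -1 := by
    have := hB0
    rw [hB] at this
    linear_combination (norm := module) this
  calc A = (β / 2) • ((2 / β) • A) := by
        rw [smul_smul]; rw [div_mul_div_comm]; rw [mul_comm]
        rw [div_self (by positivity)]; rw [one_smul]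
    _ = (β / 2) • (-1 : Matrix (Fin d) (Fin d) ℝ) := by rw [this]
    _ = (-(β / 2)) • 1 := by rw [smul_neg, neg_smul]
end

section
/- Let b ∈ C^∞(ℝ^d; ℝ^d), β > 0, let σ be a real d×d matrix, and let ρ₀ ∈ C^∞(ℝ^d × ℝ^d) satisfy ρ₀(q,p) = ρ₀(q,−p) for all (q,p) and ℒ*ρ₀ = 0, where ℒ*ρ = −p·∇_q ρ − b·∇_p ρ + (1/2) ∇_p·( ρ σσᵀ p + (1/β) σσᵀ ∇_p ρ ). Then separately, for all (q,p): p·∇_q ρ₀ + b·∇_p ρ₀ = 0 and ∇_p·( ρ₀ σσᵀ p + (1/β) σσᵀ ∇_p ρ₀ ) = 0. -/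
open Matrix MeasureTheory

/-- Partial derivative in the position variable `q_i` for `f : ℝ^d × ℝ^d → ℝ`. -/
noncomputable def pdq {d : ℕ} (i : Fin d) (f : (Fin d → ℝ) × (Fin d → ℝ) → ℝ)
    (x : (Fin d → ℝ) × (Fin d → ℝ)) : ℝ :=
  fderiv ℝ f x (Pi.single i 1, 0)

/-- Partial derivative in the momentum variable `p_i` for `f : ℝ^d × ℝ^d → ℝ`. -/
noncomputable def pdp {d : ℕ} (i : Fin d) (f : (Fin d → ℝ) × (Fin d → ℝ) → ℝ)
    (x : (Fin d → ℝ) × (Fin d → ℝ)) : ℝ :=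
  fderiv ℝ f x (0, Pi.single i 1)

/-- The kinetic (underdamped) Fokker–Planck operator
`ℒ*ρ = −p·∇_q ρ − b·∇_p ρ + (1/2)∇_p·( ρ σσᵀ p + (1/β) σσᵀ ∇_p ρ )`. -/
noncomputable def LstarUD {d : ℕ} (σ : Matrix (Fin d) (Fin d) ℝ) (β : ℝ)
    (b : (Fin d → ℝ) → Fin d → ℝ) (ρ : (Fin d → ℝ) × (Fin d → ℝ) → ℝ)
    (x : (Fin d → ℝ) × (Fin d → ℝ)) : ℝ :=
  -(∑ i, x.2 i * pdq i ρ x) - (∑ i, b x.1 i * pdp i ρ x)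
    + (1/2) * ∑ i, pdp i (fun y => ρ y * (∑ j, (σ * σᵀ) i j * y.2 j)
        + (1/β) * ∑ j, (σ * σᵀ) i j * pdp j ρ y) x

noncomputable def negP (d : ℕ) : ((Fin d → ℝ) × (Fin d → ℝ)) →L[ℝ] ((Fin d → ℝ) × (Fin d → ℝ)) :=
  (ContinuousLinearMap.fst ℝ _ _).prod (-(ContinuousLinearMap.snd ℝ _ _))

lemma negP_apply {d : ℕ} (x : (Fin d → ℝ) × (Fin d → ℝ)) : negP d x = (x.1, -x.2) := rfl

lemma fderiv_negP {d : ℕ} (f : ((Fin d → ℝ) × (Fin d → ℝ)) → ℝ) (hf : Differentiable ℝ f)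
    (x v : (Fin d → ℝ) × (Fin d → ℝ)) :
    fderiv ℝ (fun y => f (negP d y)) x v = fderiv ℝ f (negP d x) (negP d v) := by
  have h : fderiv ℝ (f ∘ negP d) x = (fderiv ℝ f (negP d x)).comp (fderiv ℝ (negP d) x) :=
    fderiv_comp x (hf _) (negP d).differentiableAt
  rw [(negP d).fderiv] at h
  calc fderiv ℝ (fun y => f (negP d y)) x v
      = ((fderiv ℝ f (negP d x)).comp (negP d)) v := by rw [← h]; rfl
    _ = fderiv ℝ f (negP d x) (negP d v) := rfl

/-- For an even function, `pdq` is even. -/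
lemma pdq_even {d : ℕ} (f : ((Fin d → ℝ) × (Fin d → ℝ)) → ℝ) (hf : Differentiable ℝ f)
    (h : ∀ y, f y = f (negP d y)) (i : Fin d) (x : (Fin d → ℝ) × (Fin d → ℝ)) :
    pdq i f (negP d x) = pdq i f x := by
  have hfe : f = fun y => f (negP d y) := funext h
  have : pdq i f x = fderiv ℝ (fun y => f (negP d y)) x (Pi.single i 1, 0) := by
    unfold pdq; rw [← hfe]
  rw [this, fderiv_negP f hf]
  have : negP d ((Pi.single i 1 : Fin d → ℝ), (0 : Fin d → ℝ)) = (Pi.single i 1, 0) := by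
    simp [negP_apply]
  rw [this]; rfl

/-- For an even function, `pdp` is odd. -/
lemma pdp_even {d : ℕ} (f : ((Fin d → ℝ) × (Fin d → ℝ)) → ℝ) (hf : Differentiable ℝ f)
    (h : ∀ y, f y = f (negP d y)) (i : Fin d) (x : (Fin d → ℝ) × (Fin d → ℝ)) :
    pdp i f (negP d x) = - pdp i f x := by
  have hfe : f = fun y => f (negP d y) := funext h
  have h1 : pdp i f x = fderiv ℝ (fun y => f (negP d y)) x (0, Pi.single i 1) := by
    unfold pdp; rw [← hfe]
  rw [h1, fderiv_negP f hf]
  have h2 : negP d ((0 : Fin d → ℝ), (Pi.single i 1 : Fin d → ℝ))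
      = -((0 : Fin d → ℝ), (Pi.single i 1 : Fin d → ℝ)) := by
    simp [negP_apply, Prod.neg_mk, Prod.mk.injEq, neg_zero]
  rw [h2, map_neg]
  simp [pdp]

/-- For an odd function, `pdp` is even. -/
lemma pdp_odd {d : ℕ} (f : ((Fin d → ℝ) × (Fin d → ℝ)) → ℝ) (hf : Differentiable ℝ f)
    (h : ∀ y, f y = - f (negP d y)) (i : Fin d) (x : (Fin d → ℝ) × (Fin d → ℝ)) :
    pdp i f (negP d x) = pdp i f x := by
  have hfe : f = fun y => -(f (negP d y)) := funext h
  have h1 : pdp i f x = fderiv ℝ (fun y => -(f (negP d y))) x (0, Pi.single i 1) := by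
    unfold pdp; rw [← hfe]
  have hd : DifferentiableAt ℝ (fun y => f (negP d y)) x :=
    (hf _).comp x (negP d).differentiableAt
  rw [h1, fderiv_fun_neg]
  have h3 : fderiv ℝ (fun y => f (negP d y)) x (0, Pi.single i 1)
      = fderiv ℝ f (negP d x) (negP d (0, Pi.single i 1)) := fderiv_negP f hf x _
  have h2 : negP d ((0 : Fin d → ℝ), (Pi.single i 1 : Fin d → ℝ))
      = -((0 : Fin d → ℝ), (Pi.single i 1 : Fin d → ℝ)) := by
    simp [negP_apply, Prod.neg_mk, Prod.mk.injEq, neg_zero]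
  simp only [ContinuousLinearMap.neg_apply, h3, h2, map_neg, neg_neg]
  rfl

/-- For a smooth density even in the momentum variable, stationarity
(`ℒ*ρ₀ = 0`) forces the transport part and the Ornstein–Uhlenbeck part to vanish separately. -/
theorem stmt4 {d : ℕ} (b : (Fin d → ℝ) → Fin d → ℝ) (hb : ContDiff ℝ (⊤ : ℕ∞) b)
    (β : ℝ) (hβ : 0 < β) (σ : Matrix (Fin d) (Fin d) ℝ)
    (ρ₀ : (Fin d → ℝ) × (Fin d → ℝ) → ℝ) (hρs : ContDiff ℝ (⊤ : ℕ∞) ρ₀)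
    (heven : ∀ q p, ρ₀ (q, p) = ρ₀ (q, -p))
    (hstat : ∀ x, LstarUD σ β b ρ₀ x = 0) :
    ∀ x : (Fin d → ℝ) × (Fin d → ℝ),
      ((∑ i, x.2 i * pdq i ρ₀ x) + (∑ i, b x.1 i * pdp i ρ₀ x) = 0)
      ∧ (∑ i, pdp i (fun y => ρ₀ y * (∑ j, (σ * σᵀ) i j * y.2 j)
            + (1/β) * ∑ j, (σ * σᵀ) i j * pdp j ρ₀ y) x = 0) := by
  intro x
  have hρd : Differentiable ℝ ρ₀ := hρs.differentiable (by simp)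
  have heven' : ∀ y, ρ₀ y = ρ₀ (negP d y) := fun y => heven y.1 y.2
  -- the OU flux components
  set g : Fin d → ((Fin d → ℝ) × (Fin d → ℝ)) → ℝ :=
    fun i y => ρ₀ y * (∑ j, (σ * σᵀ) i j * y.2 j)
      + (1/β) * ∑ j, (σ * σᵀ) i j * pdp j ρ₀ y with hg
  -- smoothness of pdp j ρ₀
  have hpdpc : ∀ j, ContDiff ℝ (⊤ : ℕ∞) (pdp j ρ₀) := by
    intro j
    have h1 : ContDiff ℝ (⊤ : ℕ∞) (fderiv ℝ ρ₀) := hρs.fderiv_right (by simp)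
    exact h1.clm_apply contDiff_const
  have hgd : ∀ i, Differentiable ℝ (g i) := by
    intro i
    have : ContDiff ℝ (⊤ : ℕ∞) (g i) := by
      apply ContDiff.add
      · exact hρs.mul (ContDiff.sum fun j _ => contDiff_const.mul
          (((ContinuousLinearMap.proj j : (Fin d → ℝ) →L[ℝ] ℝ).contDiff).comp contDiff_snd))
      · exact contDiff_const.mul (ContDiff.sum fun j _ => contDiff_const.mul (hpdpc j))
    exact this.differentiable (by simp)
  -- oddness of g i
  have hgodd : ∀ i y, g i y = - g i (negP d y) := by
    intro i y
    simp only [hg, negP_apply]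
    have hρeq : ρ₀ ((y.1, -y.2) : (Fin d → ℝ) × (Fin d → ℝ)) = ρ₀ y := (heven' y).symm
    have hpeq : ∀ j, pdp j ρ₀ ((y.1, -y.2) : (Fin d → ℝ) × (Fin d → ℝ)) = - pdp j ρ₀ y := by
      intro j; have h := pdp_even ρ₀ hρd heven' j y; rw [negP_apply] at h; exact h
    rw [hρeq]
    simp only [hpeq]
    simp only [Pi.neg_apply, mul_neg, Finset.sum_neg_distrib]
    ring
  -- relations at negP x
  have e1 : ∀ i, pdq i ρ₀ (negP d x) = pdq i ρ₀ x := fun i => pdq_even ρ₀ hρd heven' i x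
  have e2 : ∀ i, pdp i ρ₀ (negP d x) = - pdp i ρ₀ x := fun i => pdp_even ρ₀ hρd heven' i x
  have e3 : ∀ i, pdp i (fun y => ρ₀ y * (∑ j, (σ * σᵀ) i j * y.2 j)
        + (1/β) * ∑ j, (σ * σᵀ) i j * pdp j ρ₀ y) (negP d x)
      = pdp i (fun y => ρ₀ y * (∑ j, (σ * σᵀ) i j * y.2 j)
        + (1/β) * ∑ j, (σ * σᵀ) i j * pdp j ρ₀ y) x := by
    intro i
    have h := pdp_odd (g i) (hgd i) (hgodd i) i x
    simpa only [hg] using h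
  have h1 := hstat x
  have h2 := hstat (negP d x)
  unfold LstarUD at h1 h2
  have hfst : (negP d x).1 = x.1 := rfl
  have hsnd : ∀ i, (negP d x).2 i = -(x.2 i) := fun _ => rfl
  simp only [e1, e2, e3, hsnd, hfst, mul_neg, neg_mul, Finset.sum_neg_distrib, neg_neg,
    sub_neg_eq_add] at h2
  constructor
  · linarith
  · linarith
end

section
/- Let H ∈ C^∞(ℝ^d × ℝ^d; ℝ), b ∈ C^∞(ℝ^d; ℝ^d), and β > 0. Suppose that for all (q,p) ∈ ℝ^d × ℝ^d: (a) p e^{−βH(q,p)} + (1/β) ∇_p e^{−βH(q,p)} = 0, and (b) p·∇_q e^{−βH(q,p)} + b(q)·∇_p e^{−βH(q,p)} = 0. Then there exists U ∈ C^∞(ℝ^d; ℝ) such that H(q,p) = |p|²/2 + U(q) for all (q,p), and b = −∇U. -/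
open MeasureTheory

/-- The `i`-th partial derivative of `f : ℝ^d → ℝ`. -/
noncomputable def pd {d : ℕ} (i : Fin d) (f : (Fin d → ℝ) → ℝ) (x : Fin d → ℝ) : ℝ :=
  fderiv ℝ f x (Pi.single i 1)

/-- If `H` is smooth on `ℝ^d × ℝ^d` and satisfies
(a) `p e^{−βH} + (1/β) ∇_p e^{−βH} = 0` and (b) `p·∇_q e^{−βH} + b·∇_p e^{−βH} = 0`
everywhere, then `H(q,p) = |p|²/2 + U(q)` for some smooth `U` with `b = −∇U`. -/
theorem stmt6 {d : ℕ} (H : (Fin d → ℝ) × (Fin d → ℝ) → ℝ) (hH : ContDiff ℝ (⊤ : ℕ∞) H)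
    (b : (Fin d → ℝ) → Fin d → ℝ) (hb : ContDiff ℝ (⊤ : ℕ∞) b) (β : ℝ) (hβ : 0 < β)
    (ha : ∀ x : (Fin d → ℝ) × (Fin d → ℝ), ∀ i : Fin d,
      x.2 i * Real.exp (-β * H x)
        + (1/β) * pdp i (fun y => Real.exp (-β * H y)) x = 0)
    (hb2 : ∀ x : (Fin d → ℝ) × (Fin d → ℝ),
      (∑ i, x.2 i * pdq i (fun y => Real.exp (-β * H y)) x)
        + (∑ i, b x.1 i * pdp i (fun y => Real.exp (-β * H y)) x) = 0) :
    ∃ U : (Fin d → ℝ) → ℝ, ContDiff ℝ (⊤ : ℕ∞) U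
      ∧ (∀ x : (Fin d → ℝ) × (Fin d → ℝ), H x = (∑ i, x.2 i ^ 2) / 2 + U x.1)
      ∧ (∀ q i, b q i = -pd i U q) := by
  have hHd : Differentiable ℝ H := hH.differentiable (by simp)
  have hβ' : β ≠ 0 := ne_of_gt hβ
  -- derivative of the exponential
  have hexp : ∀ x : (Fin d → ℝ) × (Fin d → ℝ),
      HasFDerivAt (fun y => Real.exp (-β * H y))
        (Real.exp (-β * H x) • ((-β) • fderiv ℝ H x)) x := by
    intro x
    exact ((hHd x).hasFDerivAt.const_mul (-β)).exp
  have hfexp : ∀ x : (Fin d → ℝ) × (Fin d → ℝ),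
      fderiv ℝ (fun y => Real.exp (-β * H y)) x
        = Real.exp (-β * H x) • ((-β) • fderiv ℝ H x) := fun x => (hexp x).fderiv
  -- from (a): ∂_{p_i} H = p_i
  have hDp : ∀ x : (Fin d → ℝ) × (Fin d → ℝ), ∀ i,
      fderiv ℝ H x ((0 : Fin d → ℝ), Pi.single i 1) = x.2 i := by
    intro x i
    have h := ha x i
    rw [pdp, hfexp x] at h
    simp only [ContinuousLinearMap.smul_apply, smul_eq_mul] at h
    have hE : Real.exp (-β * H x) ≠ 0 := Real.exp_ne_zero _
    have h' : Real.exp (-β * H x)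
        * (x.2 i - fderiv ℝ H x ((0 : Fin d → ℝ), Pi.single i 1)) = 0 := by
      field_simp at h ⊢
      nlinarith [h]
    rcases mul_eq_zero.1 h' with h'' | h''
    · exact absurd h'' hE
    · linarith
  -- directional derivative in p
  have hdir : ∀ x : (Fin d → ℝ) × (Fin d → ℝ), ∀ v : Fin d → ℝ,
      fderiv ℝ H x ((0 : Fin d → ℝ), v) = ∑ i, v i * x.2 i := by
    intro x v
    have hsm : ∀ i, v i • (((0 : Fin d → ℝ), Pi.single i 1) : (Fin d → ℝ) × (Fin d → ℝ))
        = ((0 : Fin d → ℝ), Pi.single i (v i)) := by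
      intro i
      rw [Prod.smul_mk, smul_zero]
      congr 1
      ext j
      rcases eq_or_ne j i with rfl | hji
      · simp
      · simp [Pi.single_eq_of_ne hji]
    have hv : ((0 : Fin d → ℝ), v)
        = ∑ i, v i • (((0 : Fin d → ℝ), Pi.single i 1) : (Fin d → ℝ) × (Fin d → ℝ)) := by
      simp only [hsm]
      rw [Prod.ext_iff]
      refine ⟨by simp [Prod.fst_sum], ?_⟩
      rw [Prod.snd_sum]
      exact (Finset.univ_sum_single v).symm
    rw [hv, map_sum]
    refine Finset.sum_congr rfl fun i _ => ?_
    rw [ContinuousLinearMap.map_smul, hDp x i]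
    simp [mul_comm]
  -- from (b): ∑ p_i ∂_{q_i} H + ∑ b_i p_i = 0
  have hQ : ∀ x : (Fin d → ℝ) × (Fin d → ℝ),
      (∑ i, x.2 i * fderiv ℝ H x ((Pi.single i 1 : Fin d → ℝ), 0))
        + ∑ i, b x.1 i * x.2 i = 0 := by
    intro x
    have h := hb2 x
    simp only [pdq, pdp, hfexp x, ContinuousLinearMap.smul_apply, smul_eq_mul] at h
    have hE : Real.exp (-β * H x) ≠ 0 := Real.exp_ne_zero _
    have h' : Real.exp (-β * H x) * (-β) *
        ((∑ i, x.2 i * fderiv ℝ H x ((Pi.single i 1 : Fin d → ℝ), 0))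
          + ∑ i, b x.1 i * x.2 i) = 0 := by
      rw [mul_add, Finset.mul_sum, Finset.mul_sum]
      rw [← h]
      congr 1
      · congr 1; ext i; ring
      · rw [Finset.sum_congr rfl]
        intro i _
        rw [hDp x i]
        ring
    have hne : Real.exp (-β * H x) * (-β) ≠ 0 := by
      exact mul_ne_zero hE (by simpa using hβ')
    exact (mul_eq_zero.1 h').resolve_left hne
  -- U and the separable form
  set U : (Fin d → ℝ) → ℝ := fun q => H (q, 0) with hU
  have hUsmooth : ContDiff ℝ (⊤ : ℕ∞) U :=
    hH.comp (contDiff_id.prodMk contDiff_const)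
  have heq : ∀ x : (Fin d → ℝ) × (Fin d → ℝ), H x = (∑ i, x.2 i ^ 2) / 2 + U x.1 := by
    rintro ⟨q, p⟩
    set S : ℝ := ∑ i, p i ^ 2 with hS
    set g : ℝ → ℝ := fun t => H (q, t • p) - t ^ 2 * (S / 2) with hg
    have hgd : ∀ t : ℝ, HasDerivAt g 0 t := by
      intro t
      have hc : HasDerivAt (fun t : ℝ => ((q, t • p) : (Fin d → ℝ) × (Fin d → ℝ)))
          ((0 : Fin d → ℝ), (1 : ℝ) • p) t :=
        (hasDerivAt_const t q).prodMk ((hasDerivAt_id t).smul_const p)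
      have h1 : HasDerivAt (fun t : ℝ => H (q, t • p))
          (fderiv ℝ H (q, t • p) ((0 : Fin d → ℝ), (1 : ℝ) • p)) t :=
        HasFDerivAt.comp_hasDerivAt t (hHd _).hasFDerivAt hc
      have h1' : fderiv ℝ H (q, t • p) ((0 : Fin d → ℝ), (1 : ℝ) • p) = t * S := by
        rw [hdir]
        simp only [one_smul, Pi.smul_apply, smul_eq_mul]
        rw [hS, Finset.mul_sum]
        congr 1; ext i; ring
      rw [h1'] at h1
      have h2 : HasDerivAt (fun t : ℝ => t ^ 2 * (S / 2)) ((2 * t ^ 1) * (S / 2)) t :=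
        (hasDerivAt_pow 2 t).mul_const (S / 2)
      have this : HasDerivAt g (t * S - 2 * t ^ 1 * (S / 2)) t := h1.sub h2
      convert this using 1
      ring
    have hconst : g 1 = g 0 :=
      is_const_of_deriv_eq_zero (fun t => (hgd t).differentiableAt)
        (fun t => (hgd t).deriv) 1 0
    have : H (q, (1:ℝ) • p) - 1 ^ 2 * (S / 2) = H (q, (0:ℝ) • p) - 0 ^ 2 * (S / 2) := hconst
    simp only [one_smul, zero_smul, one_pow, ne_eq, OfNat.ofNat_ne_zero,
      not_false_eq_true, zero_pow, zero_mul, sub_zero] at this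
    simp only [hU]
    rw [hS] at this
    linarith
  refine ⟨U, hUsmooth, heq, ?_⟩
  -- q-derivative of H equals pd of U
  have hUd : Differentiable ℝ U := hUsmooth.differentiable (by simp)
  have hQdiff : Differentiable ℝ (fun p : Fin d → ℝ => (∑ i, p i ^ 2) / 2) := by
    have hsum : Differentiable ℝ (fun p : Fin d → ℝ => ∑ i, p i ^ 2) :=
      Differentiable.fun_sum fun i _ => (differentiable_apply i).pow 2
    simpa [div_eq_mul_inv] using hsum.mul_const ((2:ℝ)⁻¹)
  have hqder : ∀ x : (Fin d → ℝ) × (Fin d → ℝ), ∀ i,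
      fderiv ℝ H x ((Pi.single i 1 : Fin d → ℝ), 0) = pd i U x.1 := by
    intro x i
    have hHfun : H = fun y : (Fin d → ℝ) × (Fin d → ℝ) =>
        (∑ j, y.2 j ^ 2) / 2 + U y.1 := funext heq
    have hK : HasFDerivAt H
        (((fderiv ℝ (fun p : Fin d → ℝ => (∑ j, p j ^ 2) / 2) x.2).comp
            (ContinuousLinearMap.snd ℝ (Fin d → ℝ) (Fin d → ℝ)))
          + ((fderiv ℝ U x.1).comp (ContinuousLinearMap.fst ℝ (Fin d → ℝ) (Fin d → ℝ)))) x := by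
      rw [hHfun]
      exact ((hQdiff x.2).hasFDerivAt.comp x hasFDerivAt_snd).add
        ((hUd x.1).hasFDerivAt.comp x hasFDerivAt_fst)
    rw [hK.fderiv]
    simp [pd]
  intro q i
  have h := hQ (q, Pi.single i 1)
  rw [Finset.sum_eq_single i
        (fun j _ hj => by simp [Pi.single_eq_of_ne hj])
        (fun hi => absurd (Finset.mem_univ i) hi),
      Finset.sum_eq_single i
        (fun j _ hj => by simp [Pi.single_eq_of_ne hj])
        (fun hi => absurd (Finset.mem_univ i) hi)] at h
  have hq1 := hqder (q, Pi.single i 1) i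
  simp only [Pi.single_eq_same, one_mul, mul_one] at h
  rw [hq1] at h
  linarith
end

section
/- Let σ be a constant real d×d matrix, b ∈ C^∞(ℝ^d; ℝ^d), and let ρ_∞ ∈ C^∞(ℝ^d) be strictly positive and satisfy ℒ*ρ_∞ = 0, where ℒ*u = ∇·( σσᵀ(−b u + ∇u) ). Then for every h ∈ C_c^∞(ℝ^d), ∫_{ℝ^d} h(q) · ℒ*(ρ_∞ h)(q) dq = −∫_{ℝ^d} ρ_∞(q) |σᵀ ∇h(q)|² dq. In particular ∫ h ℒ*(ρ_∞ h) dq ≤ 0. -/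
open Matrix MeasureTheory

/-- The (possibly irreversible) overdamped Fokker–Planck operator
`ℒ*u = ∇·( σσᵀ(−b u + ∇u) )`. -/
noncomputable def LstarOD {d : ℕ} (σ : Matrix (Fin d) (Fin d) ℝ)
    (b : (Fin d → ℝ) → Fin d → ℝ) (u : (Fin d → ℝ) → ℝ) (q : Fin d → ℝ) : ℝ :=
  ∑ i, pd i (fun y => ∑ j, (σ * σᵀ) i j * (-(b y j) * u y + pd j u y)) q

variable {d : ℕ}

lemma contDiff_pd (i : Fin d) {f : (Fin d → ℝ) → ℝ} (hf : ContDiff ℝ (⊤ : ℕ∞) f) :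
    ContDiff ℝ (⊤ : ℕ∞) (pd i f) :=
  (hf.fderiv_right (by simp)).clm_apply contDiff_const

lemma hcs_pd (i : Fin d) {f : (Fin d → ℝ) → ℝ} (hf : HasCompactSupport f) :
    HasCompactSupport (pd i f) :=
  hf.fderiv_apply ℝ (Pi.single i 1)

lemma pd_zero_outside (i : Fin d) {f : (Fin d → ℝ) → ℝ} {x} (hx : x ∉ tsupport f) :
    pd i f x = 0 := by
  unfold pd
  rw [fderiv_of_notMem_tsupport ℝ hx]; simp

lemma pd_mul (i : Fin d) {f g : (Fin d → ℝ) → ℝ} {x} (hf : DifferentiableAt ℝ f x)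
    (hg : DifferentiableAt ℝ g x) :
    pd i (fun y => f y * g y) x = pd i f x * g x + f x * pd i g x := by
  unfold pd
  rw [fderiv_fun_mul hf hg]
  simp [smul_eq_mul]
  ring

lemma pd_sum (i : Fin d) {ι : Type*} {s : Finset ι} {F : ι → (Fin d → ℝ) → ℝ} {x}
    (hF : ∀ j ∈ s, DifferentiableAt ℝ (F j) x) :
    pd i (fun y => ∑ j ∈ s, F j y) x = ∑ j ∈ s, pd i (F j) x := by
  unfold pd
  rw [fderiv_fun_sum hF]
  simp

lemma pd_const_mul (i : Fin d) {f : (Fin d → ℝ) → ℝ} {x} (c : ℝ)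
    (hf : DifferentiableAt ℝ f x) :
    pd i (fun y => c * f y) x = c * pd i f x := by
  unfold pd
  rw [fderiv_const_mul hf]; simp

lemma pd_sub (i : Fin d) {f g : (Fin d → ℝ) → ℝ} {x} (hf : DifferentiableAt ℝ f x)
    (hg : DifferentiableAt ℝ g x) :
    pd i (fun y => f y - g y) x = pd i f x - pd i g x := by
  unfold pd
  rw [fderiv_fun_sub hf hg]; simp

lemma alg (σ : Matrix (Fin d) (Fin d) ℝ) (c : Fin d → ℝ) :
    ∑ i, c i * ∑ j, (σ * σᵀ) i j * c j = ∑ k, (∑ j, σ j k * c j) ^ 2 := by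
  have step : ∀ i, c i * (∑ j, (σ * σᵀ) i j * c j)
      = ∑ k, (σ i k * c i) * (∑ j, σ j k * c j) := by
    intro i
    simp only [Matrix.mul_apply, Matrix.transpose_apply, Finset.sum_mul, Finset.mul_sum]
    rw [Finset.sum_comm]
    refine Finset.sum_congr rfl fun k _ => ?_
    exact Finset.sum_congr rfl fun j _ => by ring
  simp only [step]
  rw [Finset.sum_comm]
  refine Finset.sum_congr rfl fun k _ => ?_
  rw [pow_two, ← Finset.sum_mul]

-- integral of a partial derivative of a compactly supported smooth function vanishes
lemma integral_pd_eq_zero (i : Fin d) {f : (Fin d → ℝ) → ℝ} (hf : ContDiff ℝ (⊤ : ℕ∞) f)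
    (hfc : HasCompactSupport f) : ∫ q, pd i f q = 0 := by
  have H := integral_mul_fderiv_eq_neg_fderiv_mul_of_integrable
    (μ := (volume : Measure (Fin d → ℝ))) (f := f) (g := fun _ => (1:ℝ))
    (v := Pi.single i 1) ?_ ?_ ?_ (fun x _ => hf.differentiable (by simp) x) (fun x _ => differentiable_const (1:ℝ) x)
  · simp only [fderiv_fun_const, Pi.zero_apply, ContinuousLinearMap.zero_apply, mul_zero,
      mul_one, integral_zero] at H
    have h2 : ∫ x, fderiv ℝ f x (Pi.single i 1) = 0 := by linarith
    exact h2
  · simp only [mul_one]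
    exact ((contDiff_pd i hf).continuous).integrable_of_hasCompactSupport (hcs_pd i hfc)
  · simp only [fderiv_fun_const, Pi.zero_apply, ContinuousLinearMap.zero_apply, mul_zero]
    exact integrable_zero _ _ _
  · simp only [mul_one]
    exact hf.continuous.integrable_of_hasCompactSupport hfc

noncomputable def flux {d : ℕ} (σ : Matrix (Fin d) (Fin d) ℝ)
    (b : (Fin d → ℝ) → Fin d → ℝ) (u : (Fin d → ℝ) → ℝ) (i : Fin d) (y : Fin d → ℝ) : ℝ :=
  ∑ j, (σ * σᵀ) i j * (-(b y j) * u y + pd j u y)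

lemma LstarOD_eq_sum_flux {d : ℕ} (σ : Matrix (Fin d) (Fin d) ℝ)
    (b : (Fin d → ℝ) → Fin d → ℝ) (u : (Fin d → ℝ) → ℝ) (q : Fin d → ℝ) :
    LstarOD σ b u q = ∑ i, pd i (flux σ b u i) q := rfl

lemma contDiff_flux {d : ℕ} {σ : Matrix (Fin d) (Fin d) ℝ}
    {b : (Fin d → ℝ) → Fin d → ℝ} {u : (Fin d → ℝ) → ℝ}
    (hb : ContDiff ℝ (⊤ : ℕ∞) b) (hu : ContDiff ℝ (⊤ : ℕ∞) u) (i : Fin d) :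
    ContDiff ℝ (⊤ : ℕ∞) (flux σ b u i) := by
  unfold flux
  exact ContDiff.sum fun j _ => contDiff_const.mul
    (((contDiff_pi.mp hb j).neg.mul hu).add (contDiff_pd j hu))

lemma flux_mul {d : ℕ} {σ : Matrix (Fin d) (Fin d) ℝ}
    {b : (Fin d → ℝ) → Fin d → ℝ} {ρ h : (Fin d → ℝ) → ℝ}
    (hρ : ContDiff ℝ (⊤ : ℕ∞) ρ) (hh : ContDiff ℝ (⊤ : ℕ∞) h) (i : Fin d) (y : Fin d → ℝ) :
    flux σ b (fun y => ρ y * h y) i y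
      = h y * flux σ b ρ i y + ρ y * ∑ j, (σ * σᵀ) i j * pd j h y := by
  unfold flux
  rw [Finset.mul_sum, Finset.mul_sum, ← Finset.sum_add_distrib]
  refine Finset.sum_congr rfl fun j _ => ?_
  rw [pd_mul j (hρ.differentiable (by simp) y) (hh.differentiable (by simp) y)]
  ring

/-- If `ρ_∞` is a smooth strictly positive stationary density (`ℒ*ρ_∞ = 0`),
then for every `h ∈ C_c^∞(ℝ^d)`,
`∫ h ℒ*(ρ_∞ h) dq = −∫ ρ_∞ |σᵀ∇h|² dq ≤ 0` (accretivity computation of Lemma 3.4). -/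
theorem stmt10 {d : ℕ} (σ : Matrix (Fin d) (Fin d) ℝ)
    (b : (Fin d → ℝ) → Fin d → ℝ) (hb : ContDiff ℝ (⊤ : ℕ∞) b)
    (ρ : (Fin d → ℝ) → ℝ) (hρs : ContDiff ℝ (⊤ : ℕ∞) ρ) (hρpos : ∀ q, 0 < ρ q)
    (hstat : ∀ q, LstarOD σ b ρ q = 0)
    (h : (Fin d → ℝ) → ℝ) (hh : ContDiff ℝ (⊤ : ℕ∞) h) (hhc : HasCompactSupport h) :
    (∫ q, h q * LstarOD σ b (fun y => ρ y * h y) q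
        = -∫ q, ρ q * ∑ i, (∑ j, σ j i * pd j h q) ^ 2)
    ∧ (∫ q, h q * LstarOD σ b (fun y => ρ y * h y) q ≤ 0) := by
  have dh : ∀ x, DifferentiableAt ℝ h x := fun x => hh.differentiable (by simp) x
  set ρh : (Fin d → ℝ) → ℝ := fun y => ρ y * h y with hρh_def
  have hρh : ContDiff ℝ (⊤ : ℕ∞) ρh := hρs.mul hh
  set G : Fin d → (Fin d → ℝ) → ℝ := flux σ b ρh with hG_def
  set K : Fin d → (Fin d → ℝ) → ℝ := flux σ b ρ with hK_def
  have hG : ∀ i, ContDiff ℝ (⊤ : ℕ∞) (G i) := fun i => contDiff_flux hb hρh i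
  have hK : ∀ i, ContDiff ℝ (⊤ : ℕ∞) (K i) := fun i => contDiff_flux hb hρs i
  have dG : ∀ i x, DifferentiableAt ℝ (G i) x := fun i x => (hG i).differentiable (by simp) x
  have dK : ∀ i x, DifferentiableAt ℝ (K i) x := fun i x => (hK i).differentiable (by simp) x
  set W : Fin d → (Fin d → ℝ) → ℝ :=
    fun i y => h y * G i y - (1/2) * ((h y * h y) * K i y) with hW_def
  have hW : ∀ i, ContDiff ℝ (⊤ : ℕ∞) (W i) := fun i =>
    (hh.mul (hG i)).sub (contDiff_const.mul ((hh.mul hh).mul (hK i)))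
  have hWc : ∀ i, HasCompactSupport (W i) := by
    intro i
    refine HasCompactSupport.intro hhc fun x hx => ?_
    have hx0 : h x = 0 := image_eq_zero_of_notMem_tsupport hx
    simp [hW_def, hx0]
  -- pointwise divergence identity
  have e1 : ∀ i q, pd i (W i) q
      = pd i h q * (G i q - h q * K i q) + (h q * pd i (G i) q
        - (h q * h q / 2) * pd i (K i) q) := by
    intro i q
    have d1 : DifferentiableAt ℝ (fun y => h y * G i y) q := (dh q).mul (dG i q)
    have dhh : DifferentiableAt ℝ (fun y => h y * h y) q := (dh q).mul (dh q)
    have d2 : DifferentiableAt ℝ (fun y => (h y * h y) * K i y) q := dhh.mul (dK i q)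
    have d3 : DifferentiableAt ℝ (fun y => (1/2 : ℝ) * ((h y * h y) * K i y)) q :=
      d2.const_mul _
    have : pd i (W i) q = pd i (fun y => h y * G i y) q
        - pd i (fun y => (1/2 : ℝ) * ((h y * h y) * K i y)) q := pd_sub i d1 d3
    rw [this, pd_mul i (dh q) (dG i q), pd_const_mul i _ d2, pd_mul i dhh (dK i q),
      pd_mul i (dh q) (dh q)]
    ring
  have key : ∀ q, ∑ i, pd i (W i) q
      = h q * LstarOD σ b ρh q + ρ q * ∑ k, (∑ j, σ j k * pd j h q) ^ 2 := by
    intro q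
    have cross : ∑ i, pd i h q * (G i q - h q * K i q)
        = ρ q * ∑ k, (∑ j, σ j k * pd j h q) ^ 2 := by
      have algh := alg σ (fun j => pd j h q)
      beta_reduce at algh
      calc ∑ i, pd i h q * (G i q - h q * K i q)
          = ∑ i, ρ q * (pd i h q * ∑ j, (σ * σᵀ) i j * pd j h q) := by
            refine Finset.sum_congr rfl fun i _ => ?_
            rw [show G i q = h q * K i q + ρ q * ∑ j, (σ * σᵀ) i j * pd j h q from
              flux_mul (σ := σ) (b := b) hρs hh i q]
            ring
        _ = ρ q * ∑ k, (∑ j, σ j k * pd j h q) ^ 2 := by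
            rw [← Finset.mul_sum, algh]
    have hKzero : ∑ i, pd i (K i) q = 0 := hstat q
    calc ∑ i, pd i (W i) q
        = ∑ i, pd i h q * (G i q - h q * K i q)
          + (h q * ∑ i, pd i (G i) q - (h q * h q / 2) * ∑ i, pd i (K i) q) := by
          rw [Finset.sum_congr rfl fun i _ => e1 i q, Finset.sum_add_distrib,
            Finset.sum_sub_distrib, ← Finset.mul_sum, ← Finset.mul_sum]
      _ = h q * LstarOD σ b ρh q + ρ q * ∑ k, (∑ j, σ j k * pd j h q) ^ 2 := by
          rw [cross, hKzero, show ∑ i, pd i (G i) q = LstarOD σ b ρh q from rfl]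
          ring
  -- integrals
  have intW : ∀ i, Integrable (fun q => pd i (W i) q) :=
    fun i => ((contDiff_pd i (hW i)).continuous).integrable_of_hasCompactSupport
      (hcs_pd i (hWc i))
  have int0 : ∫ q, ∑ i, pd i (W i) q = 0 := by
    rw [integral_finset_sum _ (fun i _ => intW i)]
    simp [integral_pd_eq_zero _ (hW _) (hWc _)]
  have hLsmooth : ContDiff ℝ (⊤ : ℕ∞) (fun q => LstarOD σ b ρh q) := by
    simp only [LstarOD_eq_sum_flux]
    exact ContDiff.sum fun i _ => contDiff_pd i (contDiff_flux hb hρh i)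
  have intX : Integrable (fun q => h q * LstarOD σ b ρh q) := by
    refine ((hh.mul hLsmooth).continuous).integrable_of_hasCompactSupport ?_
    refine HasCompactSupport.intro hhc fun x hx => ?_
    simp [image_eq_zero_of_notMem_tsupport hx]
  have hYsmooth : ContDiff ℝ (⊤ : ℕ∞) (fun q => ρ q * ∑ k, (∑ j, σ j k * pd j h q) ^ 2) :=
    hρs.mul (ContDiff.sum fun k _ =>
      (ContDiff.sum fun j _ => contDiff_const.mul (contDiff_pd j hh)).pow 2)
  have intY : Integrable (fun q => ρ q * ∑ k, (∑ j, σ j k * pd j h q) ^ 2) := by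
    refine hYsmooth.continuous.integrable_of_hasCompactSupport ?_
    refine HasCompactSupport.intro hhc fun x hx => ?_
    have : ∀ j : Fin d, pd j h x = 0 := fun j => pd_zero_outside j hx
    simp [this]
  have main : (∫ q, h q * LstarOD σ b ρh q)
      + ∫ q, ρ q * ∑ k, (∑ j, σ j k * pd j h q) ^ 2 = 0 := by
    rw [← integral_add intX intY]
    rw [show (fun q => h q * LstarOD σ b ρh q
        + ρ q * ∑ k, (∑ j, σ j k * pd j h q) ^ 2) = fun q => ∑ i, pd i (W i) q from
      funext fun q => (key q).symm]
    exact int0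
  have hYnn : 0 ≤ ∫ q, ρ q * ∑ k, (∑ j, σ j k * pd j h q) ^ 2 :=
    integral_nonneg fun q => mul_nonneg (hρpos q).le
      (Finset.sum_nonneg fun k _ => sq_nonneg _)
  constructor
  · linarith
  · linarith
end

section
/- Let b ∈ C^∞(ℝ^d; ℝ^d), α > 0, β > 0, and let ρ₀ ∈ C^∞(ℝ^d × ℝ^d × ℝ^d) satisfy ρ₀(q,p,z) = ρ₀(q,−p,z) for all (q,p,z) and ℒ*ρ₀ = 0, where ℒ*ρ = −p·∇_q ρ − b·∇_p ρ − (z·∇_p ρ − p·∇_z ρ) + α ∇_z·( z ρ + (1/β) ∇_z ρ ). Then separately, for all (q,p,z): p·∇_q ρ₀ + b·∇_p ρ₀ + z·∇_p ρ₀ − p·∇_z ρ₀ = 0 and ∇_z·( z ρ₀ + (1/β) ∇_z ρ₀ ) = 0. -/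
open MeasureTheory

/-- Partial derivative in `q_i` for `f : ℝ^d × ℝ^d × ℝ^d → ℝ` with coordinates `(q,p,z)`. -/
noncomputable def pd1 {d : ℕ} (i : Fin d)
    (f : (Fin d → ℝ) × (Fin d → ℝ) × (Fin d → ℝ) → ℝ)
    (x : (Fin d → ℝ) × (Fin d → ℝ) × (Fin d → ℝ)) : ℝ :=
  fderiv ℝ f x (Pi.single i 1, 0, 0)

/-- Partial derivative in `p_i`. -/
noncomputable def pd2 {d : ℕ} (i : Fin d)
    (f : (Fin d → ℝ) × (Fin d → ℝ) × (Fin d → ℝ) → ℝ)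
    (x : (Fin d → ℝ) × (Fin d → ℝ) × (Fin d → ℝ)) : ℝ :=
  fderiv ℝ f x (0, Pi.single i 1, 0)

/-- Partial derivative in `z_i`. -/
noncomputable def pd3 {d : ℕ} (i : Fin d)
    (f : (Fin d → ℝ) × (Fin d → ℝ) × (Fin d → ℝ) → ℝ)
    (x : (Fin d → ℝ) × (Fin d → ℝ) × (Fin d → ℝ)) : ℝ :=
  fderiv ℝ f x (0, 0, Pi.single i 1)

/-- The Fokker–Planck operator of the generalized Langevin dynamics (n = 1, A₁ = I):
`ℒ*ρ = −p·∇_q ρ − b·∇_p ρ − (z·∇_p ρ − p·∇_z ρ) + α ∇_z·( z ρ + (1/β) ∇_z ρ )`. -/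
noncomputable def LstarGLE {d : ℕ} (b : (Fin d → ℝ) → Fin d → ℝ) (α β : ℝ)
    (ρ : (Fin d → ℝ) × (Fin d → ℝ) × (Fin d → ℝ) → ℝ)
    (x : (Fin d → ℝ) × (Fin d → ℝ) × (Fin d → ℝ)) : ℝ :=
  -(∑ i, x.2.1 i * pd1 i ρ x) - (∑ i, b x.1 i * pd2 i ρ x)
    - ((∑ i, x.2.2 i * pd2 i ρ x) - (∑ i, x.2.1 i * pd3 i ρ x))
    + α * ∑ i, pd3 i (fun y => y.2.2 i * ρ y + (1/β) * pd3 i ρ y) x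

noncomputable def flipP (d : ℕ) :
    ((Fin d → ℝ) × (Fin d → ℝ) × (Fin d → ℝ)) →L[ℝ]
      ((Fin d → ℝ) × (Fin d → ℝ) × (Fin d → ℝ)) :=
  (ContinuousLinearMap.id ℝ (Fin d → ℝ)).prodMap
    ((-(ContinuousLinearMap.id ℝ (Fin d → ℝ))).prodMap (ContinuousLinearMap.id ℝ (Fin d → ℝ)))

lemma flipP_apply {d : ℕ} (x : (Fin d → ℝ) × (Fin d → ℝ) × (Fin d → ℝ)) :
    flipP d x = (x.1, -x.2.1, x.2.2) := by
  simp [flipP, Prod.map]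

lemma even_fderiv {d : ℕ} (f : (Fin d → ℝ) × (Fin d → ℝ) × (Fin d → ℝ) → ℝ)
    (hf : Differentiable ℝ f) (hfe : ∀ q p z, f (q, p, z) = f (q, -p, z))
    (x v : (Fin d → ℝ) × (Fin d → ℝ) × (Fin d → ℝ)) :
    fderiv ℝ f x v = fderiv ℝ f (flipP d x) (flipP d v) := by
  have hfl : f = f ∘ (flipP d) := by
    funext y
    obtain ⟨q, p, z⟩ := y
    simpa [flipP_apply] using hfe q p z
  conv_lhs => rw [hfl]
  rw [fderiv_comp x (hf _) (flipP d).differentiableAt, (flipP d).fderiv]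
  rfl

lemma pd1_even {d : ℕ} (f : (Fin d → ℝ) × (Fin d → ℝ) × (Fin d → ℝ) → ℝ)
    (hf : Differentiable ℝ f) (hfe : ∀ q p z, f (q, p, z) = f (q, -p, z))
    (i : Fin d) (x : (Fin d → ℝ) × (Fin d → ℝ) × (Fin d → ℝ)) :
    pd1 i f (flipP d x) = pd1 i f x := by
  have h := even_fderiv f hf hfe x (Pi.single i 1, 0, 0)
  rw [flipP_apply (Pi.single i 1, 0, 0)] at h
  simpa [pd1] using h.symm

lemma pd3_even {d : ℕ} (f : (Fin d → ℝ) × (Fin d → ℝ) × (Fin d → ℝ) → ℝ)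
    (hf : Differentiable ℝ f) (hfe : ∀ q p z, f (q, p, z) = f (q, -p, z))
    (i : Fin d) (x : (Fin d → ℝ) × (Fin d → ℝ) × (Fin d → ℝ)) :
    pd3 i f (flipP d x) = pd3 i f x := by
  have h := even_fderiv f hf hfe x (0, 0, Pi.single i 1)
  rw [flipP_apply (0, 0, Pi.single i 1)] at h
  simpa [pd3] using h.symm

lemma pd2_even {d : ℕ} (f : (Fin d → ℝ) × (Fin d → ℝ) × (Fin d → ℝ) → ℝ)
    (hf : Differentiable ℝ f) (hfe : ∀ q p z, f (q, p, z) = f (q, -p, z))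
    (i : Fin d) (x : (Fin d → ℝ) × (Fin d → ℝ) × (Fin d → ℝ)) :
    pd2 i f (flipP d x) = -pd2 i f x := by
  have h := even_fderiv f hf hfe x (0, Pi.single i 1, 0)
  rw [flipP_apply (0, Pi.single i 1, 0)] at h
  have hv : ((0, -Pi.single i 1, 0) :
      (Fin d → ℝ) × (Fin d → ℝ) × (Fin d → ℝ)) = -(0, Pi.single i 1, 0) := by
    simp [Prod.ext_iff]
  rw [hv, map_neg] at h
  simp only [pd2]
  linarith

/-- For a smooth density even in the momentum variable `p`, stationarity
of the generalized Langevin Fokker–Planck equation forces the transport part and the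
Ornstein–Uhlenbeck part in `z` to vanish separately. -/
theorem stmt15 {d : ℕ} (b : (Fin d → ℝ) → Fin d → ℝ) (hb : ContDiff ℝ (⊤ : ℕ∞) b)
    (α β : ℝ) (hα : 0 < α) (hβ : 0 < β)
    (ρ₀ : (Fin d → ℝ) × (Fin d → ℝ) × (Fin d → ℝ) → ℝ) (hρs : ContDiff ℝ (⊤ : ℕ∞) ρ₀)
    (heven : ∀ q p z, ρ₀ (q, p, z) = ρ₀ (q, -p, z))
    (hstat : ∀ x, LstarGLE b α β ρ₀ x = 0) :
    ∀ x : (Fin d → ℝ) × (Fin d → ℝ) × (Fin d → ℝ),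
      ((∑ i, x.2.1 i * pd1 i ρ₀ x) + (∑ i, b x.1 i * pd2 i ρ₀ x)
          + (∑ i, x.2.2 i * pd2 i ρ₀ x) - (∑ i, x.2.1 i * pd3 i ρ₀ x) = 0)
      ∧ (∑ i, pd3 i (fun y => y.2.2 i * ρ₀ y + (1/β) * pd3 i ρ₀ y) x = 0) := by
  have hdiff : Differentiable ℝ ρ₀ := hρs.differentiable (by simp)
  -- smoothness and evenness of the auxiliary functions g i
  have hpd3c : ∀ i : Fin d, ContDiff ℝ (⊤ : ℕ∞)
      (fun y : (Fin d → ℝ) × (Fin d → ℝ) × (Fin d → ℝ) => pd3 i ρ₀ y) := by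
    intro i
    exact (hρs.fderiv_right (m := (⊤ : ℕ∞)) (by simp)).clm_apply contDiff_const
  have hcoord : ∀ i : Fin d, ContDiff ℝ (⊤ : ℕ∞)
      (fun y : (Fin d → ℝ) × (Fin d → ℝ) × (Fin d → ℝ) => y.2.2 i) := by
    intro i
    exact (contDiff_apply ℝ ℝ i).comp (contDiff_snd.comp contDiff_snd)
  have hgc : ∀ i : Fin d, Differentiable ℝ
      (fun y : (Fin d → ℝ) × (Fin d → ℝ) × (Fin d → ℝ) =>
        y.2.2 i * ρ₀ y + (1/β) * pd3 i ρ₀ y) := by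
    intro i
    exact (((hcoord i).mul hρs).add (contDiff_const.mul (hpd3c i))).differentiable (by simp)
  have hge : ∀ i : Fin d, ∀ q p z,
      (fun y : (Fin d → ℝ) × (Fin d → ℝ) × (Fin d → ℝ) =>
        y.2.2 i * ρ₀ y + (1/β) * pd3 i ρ₀ y) (q, p, z)
      = (fun y => y.2.2 i * ρ₀ y + (1/β) * pd3 i ρ₀ y) (q, -p, z) := by
    intro i q p z
    have h3 : pd3 i ρ₀ (q, -p, z) = pd3 i ρ₀ (q, p, z) := by
      have := pd3_even ρ₀ hdiff heven i (q, p, z)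
      rwa [flipP_apply] at this
    simp only
    rw [← heven, h3]
  intro x
  have h1 : ∀ i, pd1 i ρ₀ (flipP d x) = pd1 i ρ₀ x :=
    fun i => pd1_even ρ₀ hdiff heven i x
  have h2 : ∀ i, pd2 i ρ₀ (flipP d x) = -pd2 i ρ₀ x :=
    fun i => pd2_even ρ₀ hdiff heven i x
  have h3 : ∀ i, pd3 i ρ₀ (flipP d x) = pd3 i ρ₀ x :=
    fun i => pd3_even ρ₀ hdiff heven i x
  have hg3 : ∀ i : Fin d,
      pd3 i (fun y => y.2.2 i * ρ₀ y + (1/β) * pd3 i ρ₀ y) (flipP d x)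
        = pd3 i (fun y => y.2.2 i * ρ₀ y + (1/β) * pd3 i ρ₀ y) x :=
    fun i => pd3_even _ (hgc i) (hge i) i x
  have e1 := hstat x
  have e2 := hstat (flipP d x)
  simp only [LstarGLE] at e1 e2
  simp only [h1, h2, h3, hg3] at e2
  rw [flipP_apply] at e2
  simp only [Pi.neg_apply, neg_mul, mul_neg, Finset.sum_neg_distrib, neg_neg] at e2
  have hαS : α * ∑ i, pd3 i (fun y => y.2.2 i * ρ₀ y + (1/β) * pd3 i ρ₀ y) x = 0 := by
    linarith
  have hS : ∑ i, pd3 i (fun y => y.2.2 i * ρ₀ y + (1/β) * pd3 i ρ₀ y) x = 0 := by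
    rcases mul_eq_zero.mp hαS with h | h
    · exact absurd h hα.ne'
    · exact h
  exact ⟨by linarith, hS⟩
end
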